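/- arXiv:2004.09689 — 6 statements merged into one kernel-verified Lean document; each statement's English description precedes it below -/
import Mathlib

section
/- Let f : α → α be a map and let a, b ∈ α be periodic points of f, i.e., there exist m ≥ 1 and n ≥ 1 with f^[m](a) = a and f^[n](b) = b. If a and b are connected in the undirected graph of f — that is, the pair (a, b) lies in the reflexive–transitive closure of the relation 'x ~ y iff f(x) = y or f(y) = x' — then b lies in the forward orbit of a: there exists k ∈ ℕ with f^[k](a) = b. (Equivalently: a connected component of the directed graph of f contains at most one cycle.) -/
/-- If two periodic points of a map `f` are connected in the undirected graph of `f`,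
then one lies in the forward orbit of the other: a connected component of the directed
graph of `f` contains at most one cycle. -/
theorem stmt_3 {α : Type*} (f : α → α) (a b : α)
    (ha : ∃ m ≥ 1, f^[m] a = a) (hb : ∃ n ≥ 1, f^[n] b = b)
    (hconn : Relation.ReflTransGen (fun x y => f x = y ∨ f y = x) a b) :
    ∃ k : ℕ, f^[k] a = b := by
  -- Key invariant: any point connected to `a` eventually maps into the forward orbit of `a`.
  have key : ∀ c, Relation.ReflTransGen (fun x y => f x = y ∨ f y = x) a c →
      ∃ k j : ℕ, f^[k] c = f^[j] a := by
    intro c h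
    induction h with
    | refl => exact ⟨0, 0, rfl⟩
    | tail _ hr ih =>
      obtain ⟨k, j, hk⟩ := ih
      rename_i c' d _
      rcases hr with hcd | hdc
      · cases k with
        | zero =>
          refine ⟨0, j + 1, ?_⟩
          simp only [Function.iterate_zero, id] at hk ⊢
          rw [Function.iterate_succ_apply', ← hk, hcd]
        | succ k' =>
          refine ⟨k', j, ?_⟩
          rw [← hcd, ← Function.iterate_succ_apply, hk]
      · refine ⟨k + 1, j, ?_⟩
        rw [Function.iterate_succ_apply, hdc, hk]
  obtain ⟨k, j, hk⟩ := key b hconn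
  obtain ⟨n, hn1, hnb⟩ := hb
  have hnk : f^[n * k] b = b := by
    rw [Function.iterate_mul]
    exact Function.iterate_fixed hnb k
  have hle : k ≤ n * k := Nat.le_mul_of_pos_left k hn1
  refine ⟨(n * k - k) + j, ?_⟩
  rw [Function.iterate_add_apply, ← hk, ← Function.iterate_add_apply,
    Nat.sub_add_cancel hle, hnk]
end

section
/- Consider a (d₁,d₂)-regular weighted directed multigraph (V, Z, s, t, e₁, e₂), and assume that the set of edges z with e₂(z) > 1 is finite. Let S ⊆ V be a finite backward-complete set of vertices. Then card(S)·d₂ ≤ card(S)·d₁ + Σ_{z ∈ Z} (e₂(z) − 1), where the sum ranges over the (finitely many) edges with e₂(z) > 1. -/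
/-- A weighted directed multigraph: vertices `V`, edges `Z`, source and target maps,
and weight functions `e₁, e₂ : Z → ℕ` taking positive values (abstracting the directed
graph of a self-correspondence, with ramification indices as weights). -/
structure WeightedDigraph (V Z : Type*) where
  s : Z → V
  t : Z → V
  e₁ : Z → ℕ
  e₂ : Z → ℕ
  e₁_pos : ∀ z, 1 ≤ e₁ z
  e₂_pos : ∀ z, 1 ≤ e₂ z

private lemma fiber_sum {V Z : Type*} (m : Z → V) (e : Z → ℕ) (d : ℕ)
    (hreg : ∀ x : V, {z | m z = x}.Finite ∧ ∑ᶠ z ∈ {z | m z = x}, e z = d)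
    (S : Set V) (hSfin : S.Finite) :
    {z | m z ∈ S}.Finite ∧ ∑ᶠ z ∈ {z | m z ∈ S}, e z = S.ncard * d := by
  classical
  have hun : {z | m z ∈ S} = ⋃ x ∈ S, {z | m z = x} := by
    ext z; simp
  have hfin : {z | m z ∈ S}.Finite := by
    rw [hun]; exact hSfin.biUnion fun x _ => (hreg x).1
  refine ⟨hfin, ?_⟩
  have hdisj : S.PairwiseDisjoint (fun x => {z | m z = x}) := by
    intro x hx y hy hxy
    simp only [Function.onFun, Set.disjoint_left]
    rintro z (hz : m z = x) (hz' : m z = y)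
    exact hxy (hz ▸ hz')
  rw [hun, finsum_mem_biUnion hdisj hSfin (fun x _ => (hreg x).1),
    finsum_mem_congr rfl (fun x (_ : x ∈ S) => (hreg x).2),
    finsum_mem_eq_finite_toFinset_sum _ hSfin, Finset.sum_const, smul_eq_mul,
    Set.ncard_eq_toFinset_card _ hSfin]

/-- The counting core of Proposition 2.1: in a `(d₁, d₂)`-regular weighted directed
multigraph with only finitely many edges of target-weight `> 1`, any finite
backward-complete set `S` satisfies
`|S| d₂ ≤ |S| d₁ + Σ_z (e₂ z − 1)`. -/
theorem stmt_6 {V Z : Type*} (G : WeightedDigraph V Z) (d₁ d₂ : ℕ)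
    (hreg₁ : ∀ x : V, {z | G.s z = x}.Finite ∧ ∑ᶠ z ∈ {z | G.s z = x}, G.e₁ z = d₁)
    (hreg₂ : ∀ x : V, {z | G.t z = x}.Finite ∧ ∑ᶠ z ∈ {z | G.t z = x}, G.e₂ z = d₂)
    (hram : {z | 1 < G.e₂ z}.Finite)
    (S : Set V) (hSfin : S.Finite)
    (hback : ∀ z, G.t z ∈ S → G.s z ∈ S) :
    S.ncard * d₂ ≤ S.ncard * d₁ + ∑ᶠ z ∈ {z | 1 < G.e₂ z}, (G.e₂ z - 1) := by
  classical
  obtain ⟨hTfin, hT⟩ := fiber_sum G.t G.e₂ d₂ hreg₂ S hSfin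
  obtain ⟨hUfin, hU⟩ := fiber_sum G.s G.e₁ d₁ hreg₁ S hSfin
  set Tf := hTfin.toFinset with hTf
  set Uf := hUfin.toFinset with hUf
  have hram' : ∑ᶠ z ∈ {z | 1 < G.e₂ z}, (G.e₂ z - 1)
      = ∑ z ∈ hram.toFinset, (G.e₂ z - 1) :=
    finsum_mem_eq_finite_toFinset_sum _ hram
  have h1 : S.ncard * d₂ = Tf.card + ∑ z ∈ Tf, (G.e₂ z - 1) := by
    rw [← hT, finsum_mem_eq_finite_toFinset_sum _ hTfin, ← hTf]
    have : ∀ z ∈ Tf, G.e₂ z = 1 + (G.e₂ z - 1) := fun z _ => by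
      have := G.e₂_pos z; omega
    rw [Finset.sum_congr rfl this, Finset.sum_add_distrib, Finset.sum_const, smul_eq_mul,
      mul_one]
  have h2 : ∑ z ∈ Tf, (G.e₂ z - 1) ≤ ∑ z ∈ hram.toFinset, (G.e₂ z - 1) := by
    rw [← Finset.sum_filter_ne_zero Tf]
    refine Finset.sum_le_sum_of_subset ?_
    intro z hz
    simp only [Finset.mem_filter] at hz
    have : 1 < G.e₂ z := by have := G.e₂_pos z; omega
    simpa [Set.Finite.mem_toFinset] using this
  have h3 : Tf.card ≤ Uf.card := by
    apply Finset.card_le_card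
    intro z hz
    simp only [hTf, hUf, Set.Finite.mem_toFinset, Set.mem_setOf_eq] at hz ⊢
    exact hback z hz
  have h4 : Uf.card ≤ S.ncard * d₁ := by
    rw [← hU, finsum_mem_eq_finite_toFinset_sum _ hUfin, ← hUf]
    calc Uf.card = ∑ _z ∈ Uf, 1 := by simp
    _ ≤ ∑ z ∈ Uf, G.e₁ z := Finset.sum_le_sum fun z _ => G.e₁_pos z
  rw [h1, hram']
  omega
end

section
/- Consider a (d₁,d₂)-regular weighted directed multigraph (V, Z, s, t, e₁, e₂) with d₁ ≤ d₂. Let S ⊆ V be a finite backward-complete set such that every edge z whose source lies in S satisfies e₂(z) ≤ e₁(z). Then: (1) every edge whose source lies in S also has its target in S, so the set of edges with source in S equals the set of edges with target in S (S is complete); (2) e₁(z) = e₂(z) for every edge z with source in S (S is equiramified); and (3) if S is nonempty then d₁ = d₂. -/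
/-- Scholium 2.2: in a `(d₁, d₂)`-regular weighted directed multigraph with `d₁ ≤ d₂`,
a finite backward-complete set `S` on whose out-edges `e₂ ≤ e₁` is complete and
equiramified, and if `S` is nonempty then `d₁ = d₂`. -/
theorem stmt_7 {V Z : Type*} (G : WeightedDigraph V Z) (d₁ d₂ : ℕ) (hd : d₁ ≤ d₂)
    (hreg₁ : ∀ x : V, {z | G.s z = x}.Finite ∧ ∑ᶠ z ∈ {z | G.s z = x}, G.e₁ z = d₁)
    (hreg₂ : ∀ x : V, {z | G.t z = x}.Finite ∧ ∑ᶠ z ∈ {z | G.t z = x}, G.e₂ z = d₂)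
    (S : Set V) (hSfin : S.Finite)
    (hback : ∀ z, G.t z ∈ S → G.s z ∈ S)
    (hram : ∀ z, G.s z ∈ S → G.e₂ z ≤ G.e₁ z) :
    (∀ z, G.s z ∈ S → G.t z ∈ S) ∧
    {z | G.s z ∈ S} = {z | G.t z ∈ S} ∧
    (∀ z, G.s z ∈ S → G.e₁ z = G.e₂ z) ∧
    (S.Nonempty → d₁ = d₂) := by
  classical
  have hAfin : {z | G.s z ∈ S}.Finite := by
    have : {z | G.s z ∈ S} = ⋃ x ∈ S, {z | G.s z = x} := by
      ext z; simp [Set.mem_iUnion]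
    rw [this]
    exact Set.Finite.biUnion hSfin (fun x _ => (hreg₁ x).1)
  have hBfin : {z | G.t z ∈ S}.Finite := by
    have : {z | G.t z ∈ S} = ⋃ x ∈ S, {z | G.t z = x} := by
      ext z; simp [Set.mem_iUnion]
    rw [this]
    exact Set.Finite.biUnion hSfin (fun x _ => (hreg₂ x).1)
  set SF := hSfin.toFinset with hSF
  set AF := hAfin.toFinset with hAF
  set BF := hBfin.toFinset with hBF
  have hmemA : ∀ z, z ∈ AF ↔ G.s z ∈ S := fun z => hAfin.mem_toFinset
  have hmemB : ∀ z, z ∈ BF ↔ G.t z ∈ S := fun z => hBfin.mem_toFinset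
  have hsub : BF ⊆ AF := by
    intro z hz
    exact (hmemA z).2 (hback z ((hmemB z).1 hz))
  -- sum over AF of e₁ equals SF.card * d₁
  have hsumA : ∑ z ∈ AF, G.e₁ z = SF.card * d₁ := by
    have hmaps : ∀ z ∈ AF, G.s z ∈ SF := by
      intro z hz; simpa [hSF, hSfin.mem_toFinset] using (hmemA z).1 hz
    rw [← Finset.sum_fiberwise_of_maps_to hmaps]
    have hconst : ∀ x ∈ SF, (∑ z ∈ AF.filter (fun z => G.s z = x), G.e₁ z) = d₁ := by
      intro x hx
      have hx' : x ∈ S := by simpa [hSF, hSfin.mem_toFinset] using hx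
      have hfe : AF.filter (fun z => G.s z = x) = ((hreg₁ x).1).toFinset := by
        ext z
        simp only [Finset.mem_filter, Set.Finite.mem_toFinset, Set.mem_setOf_eq, hmemA z]
        constructor
        · rintro ⟨_, h⟩; exact h
        · intro h; exact ⟨h ▸ hx', h⟩
      rw [hfe, ← finsum_mem_eq_finite_toFinset_sum _ (hreg₁ x).1, (hreg₁ x).2]
    rw [Finset.sum_congr rfl hconst, Finset.sum_const, smul_eq_mul]
  have hsumB : ∑ z ∈ BF, G.e₂ z = SF.card * d₂ := by
    have hmaps : ∀ z ∈ BF, G.t z ∈ SF := by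
      intro z hz; simpa [hSF, hSfin.mem_toFinset] using (hmemB z).1 hz
    rw [← Finset.sum_fiberwise_of_maps_to hmaps]
    have hconst : ∀ x ∈ SF, (∑ z ∈ BF.filter (fun z => G.t z = x), G.e₂ z) = d₂ := by
      intro x hx
      have hx' : x ∈ S := by simpa [hSF, hSfin.mem_toFinset] using hx
      have hfe : BF.filter (fun z => G.t z = x) = ((hreg₂ x).1).toFinset := by
        ext z
        simp only [Finset.mem_filter, Set.Finite.mem_toFinset, Set.mem_setOf_eq, hmemB z]
        constructor
        · rintro ⟨_, h⟩; exact h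
        · intro h; exact ⟨h ▸ hx', h⟩
      rw [hfe, ← finsum_mem_eq_finite_toFinset_sum _ (hreg₂ x).1, (hreg₂ x).2]
    rw [Finset.sum_congr rfl hconst, Finset.sum_const, smul_eq_mul]
  -- chain of inequalities
  have h1 : ∑ z ∈ BF, G.e₂ z ≤ ∑ z ∈ AF, G.e₂ z :=
    Finset.sum_le_sum_of_subset hsub
  have h2 : ∑ z ∈ AF, G.e₂ z ≤ ∑ z ∈ AF, G.e₁ z :=
    Finset.sum_le_sum (fun z hz => hram z ((hmemA z).1 hz))
  have h3 : SF.card * d₁ ≤ SF.card * d₂ := Nat.mul_le_mul_left _ hd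
  have key : SF.card * d₂ = SF.card * d₁ := by
    rw [← hsumA, ← hsumB]; exact le_antisymm (h1.trans h2) (by omega)
  have hall : ∑ z ∈ BF, G.e₂ z = ∑ z ∈ AF, G.e₂ z ∧
      ∑ z ∈ AF, G.e₂ z = ∑ z ∈ AF, G.e₁ z := by
    constructor <;> omega
  -- AF = BF
  have hAB : AF = BF := by
    apply Finset.Subset.antisymm _ hsub
    by_contra hcon
    obtain ⟨z, hzA, hzB⟩ : ∃ z, z ∈ AF ∧ z ∉ BF := by
      by_contra h; push_neg at h; exact hcon (fun z hz => h z hz)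
    have := Finset.sum_lt_sum_of_subset hsub hzA hzB (G.e₂_pos z)
      (fun _ _ _ => Nat.zero_le _)
    omega
  have heq : ∀ z ∈ AF, G.e₁ z = G.e₂ z := by
    intro z hz
    by_contra hne
    have hlt : G.e₂ z < G.e₁ z := lt_of_le_of_ne (hram z ((hmemA z).1 hz)) (Ne.symm hne)
    have := Finset.sum_lt_sum (f := G.e₂) (g := G.e₁)
      (fun i hi => hram i ((hmemA i).1 hi)) ⟨z, hz, hlt⟩
    omega
  refine ⟨fun z hz => (hmemB z).1 (hAB ▸ (hmemA z).2 hz), ?_, fun z hz => heq z ((hmemA z).2 hz), ?_⟩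
  · ext z
    simp only [Set.mem_setOf_eq]
    rw [← hmemA z, ← hmemB z, hAB]
  · rintro ⟨x, hx⟩
    have hcard : 0 < SF.card := Finset.card_pos.2 ⟨x, by simpa [hSF, hSfin.mem_toFinset] using hx⟩
    exact Nat.eq_of_mul_eq_mul_left hcard key.symm
end

section
/- Let r be a relation on a set V such that every vertex has only finitely many r-successors, and assume that every nonempty finite forward-complete subset of V is complete. Let S ⊆ V be an infinite irreducible complete set. Then for every x ∈ S and every m ∈ ℕ there exists a vertex y such that there is a directed path of length exactly m+1 from x to y, but no directed path of length at most m from x to y. -/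
/-- `relIter r j x y` holds iff there is a directed path of length `j` from `x` to `y`
in the directed graph of the relation `r`. -/
def relIter {V : Type*} (r : V → V → Prop) : ℕ → V → V → Prop
  | 0 => Eq
  | n + 1 => fun x z => ∃ y, relIter r n x y ∧ r y z

/-- A set is forward-complete if it contains all successors of its elements. -/
def IsForwardComplete {V : Type*} (r : V → V → Prop) (S : Set V) : Prop :=
  ∀ a ∈ S, ∀ b, r a b → b ∈ S

/-- A set is backward-complete if it contains all predecessors of its elements. -/
def IsBackwardComplete {V : Type*} (r : V → V → Prop) (S : Set V) : Prop :=
  ∀ a b, r a b → b ∈ S → a ∈ S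

/-- In a locally finite directed graph in which every nonempty finite forward-complete
set is complete, every infinite irreducible complete set `S` contains, for each `x ∈ S`
and each `m`, a point reachable from `x` in exactly `m + 1` steps but not in `≤ m`
steps. -/
theorem stmt_9 {V : Type*} (r : V → V → Prop)
    (hlocfin : ∀ x : V, {y | r x y}.Finite)
    (hcomplete : ∀ T : Set V, T.Nonempty → T.Finite → IsForwardComplete r T →
      IsBackwardComplete r T)
    (S : Set V) (hSinf : S.Infinite)
    (hSfwd : IsForwardComplete r S) (hSbwd : IsBackwardComplete r S)
    (hirr : ∀ T : Set V, T.Nonempty → IsForwardComplete r T →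
      IsBackwardComplete r T → T ⊆ S → T = S) :
    ∀ x ∈ S, ∀ m : ℕ, ∃ y,
      relIter r (m + 1) x y ∧ ∀ j ≤ m, ¬ relIter r j x y := by
  intro x hx m
  by_contra hcon
  push_neg at hcon
  -- finiteness of reach sets
  have hfin : ∀ j : ℕ, {y | relIter r j x y}.Finite := by
    intro j
    induction j with
    | zero =>
      have : {y | relIter r 0 x y} = {x} := by
        ext y; simp [relIter, eq_comm]
      rw [this]; exact Set.finite_singleton x
    | succ n ih =>
      have : {z | relIter r (n + 1) x z} ⊆
          ⋃ y ∈ {y | relIter r n x y}, {z | r y z} := by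
        rintro z ⟨y, hy, hr⟩
        exact Set.mem_biUnion hy hr
      exact (Set.Finite.biUnion ih fun y _ => hlocfin y).subset this
  have hsub : ∀ j y, relIter r j x y → y ∈ S := by
    intro j
    induction j with
    | zero => intro y hy; cases hy; exact hx
    | succ n ih =>
      rintro z ⟨y, hy, hr⟩
      exact hSfwd y (ih y hy) z hr
  -- B = reachable in ≤ m steps
  set B : Set V := {y | ∃ j ≤ m, relIter r j x y} with hB
  have hBne : B.Nonempty := ⟨x, 0, Nat.zero_le m, rfl⟩
  have hBfin : B.Finite := by
    have : B ⊆ ⋃ j ∈ Finset.range (m + 1), {y | relIter r j x y} := by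
      rintro y ⟨j, hj, hy⟩
      exact Set.mem_biUnion (Finset.mem_range.mpr (Nat.lt_succ_of_le hj)) hy
    exact (Set.Finite.biUnion (Finset.range (m + 1)).finite_toSet
      fun j _ => hfin j).subset this
  have hBfwd : IsForwardComplete r B := by
    rintro a ⟨j, hj, ha⟩ b hab
    rcases Nat.lt_or_ge j m with h | h
    · exact ⟨j + 1, Nat.succ_le_of_lt h, a, ha, hab⟩
    · have hjm : j = m := le_antisymm hj h
      have : relIter r (m + 1) x b := ⟨a, hjm ▸ ha, hab⟩
      obtain ⟨j', hj', hb⟩ := hcon b this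
      exact ⟨j', hj', hb⟩
  have hBbwd := hcomplete B hBne hBfin hBfwd
  have hBS : B ⊆ S := by rintro y ⟨j, _, hy⟩; exact hsub j y hy
  have := hirr B hBne hBfwd hBbwd hBS
  exact hSinf (this ▸ hBfin)
end

section
/- Let r be a relation on a set V such that every vertex has at least one r-successor and at least one r-predecessor, and let r∘r be the composed relation defined by (r∘r) x z iff there exists y with r x y and r y z. If S ⊆ V is an irreducible complete set for r, then S is the union of at most two irreducible complete sets for r∘r: there exist sets S₁, S₂ ⊆ V with S = S₁ ∪ S₂, S₁ nonempty, such that S₁ is an irreducible complete set for r∘r and S₂ is either empty or an irreducible complete set for r∘r. -/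
/-- An irreducible complete set: nonempty, complete, with no nonempty proper complete
subset. -/
def IsIrredComplete {V : Type*} (r : V → V → Prop) (S : Set V) : Prop :=
  S.Nonempty ∧ IsForwardComplete r S ∧ IsBackwardComplete r S ∧
    ∀ T : Set V, T.Nonempty → IsForwardComplete r T → IsBackwardComplete r T →
      T ⊆ S → T = S

open Relation

/-- Membership in a forward- and backward-complete set is invariant along `EqvGen`. -/
lemma mem_iff_of_eqvGen {V : Type*} {p : V → V → Prop} {T : Set V}
    (hf : IsForwardComplete p T) (hb : IsBackwardComplete p T)
    {a b : V} (h : EqvGen p a b) : a ∈ T ↔ b ∈ T := by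
  induction h with
  | rel x y hxy => exact ⟨fun hx => hf x hx y hxy, fun hy => hb x y hxy hy⟩
  | refl x => exact Iff.rfl
  | symm x y _ ih => exact ih.symm
  | trans x y z _ _ ih₁ ih₂ => exact ih₁.trans ih₂

/-- The `EqvGen` class of a point is an irreducible complete set. -/
lemma isIrredComplete_class {V : Type*} (p : V → V → Prop) (x : V) :
    IsIrredComplete p {y | EqvGen p x y} := by
  refine ⟨⟨x, EqvGen.refl x⟩, ?_, ?_, ?_⟩
  · exact fun a ha b hab => (ha : EqvGen p x a).trans _ _ _ (EqvGen.rel a b hab)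
  · exact fun a b hab hb => (hb : EqvGen p x b).trans _ _ _ ((EqvGen.rel a b hab).symm _ _)
  · rintro T ⟨t, ht⟩ hf hb hTs
    apply Set.Subset.antisymm hTs
    intro y hy
    have hxt : EqvGen p x t := hTs ht
    have : EqvGen p t y := (hxt.symm _ _).trans _ _ _ hy
    exact (mem_iff_of_eqvGen hf hb this).mp ht

section

variable {V : Type*} {r : V → V → Prop}

local notation "q" => fun x z => ∃ y, r x y ∧ r y z

/-- Two successors of the same vertex are `q`-equivalent. -/
lemma sameSource (hpred : ∀ y : V, ∃ x, r x y) {a b b' : V} (h : r a b) (h' : r a b') :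
    EqvGen (q) b b' := by
  obtain ⟨p, hp⟩ := hpred a
  exact ((EqvGen.rel p b ⟨a, hp, h⟩).symm _ _).trans _ _ _ (EqvGen.rel p b' ⟨a, hp, h'⟩)

/-- Successors of `q`-equivalent vertices are `q`-equivalent. -/
lemma succ_equiv (hsucc : ∀ x : V, ∃ y, r x y) (hpred : ∀ y : V, ∃ x, r x y) : ∀ {a c : V}, EqvGen (q) a c →
    ∀ b d, r a b → r c d → EqvGen (q) b d := by
  intro a c h
  induction h with
  | rel x y hxy =>
    intro b d hxb hyd
    obtain ⟨m, hxm, hmy⟩ := hxy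
    exact (sameSource hpred hxb hxm).trans _ _ _ (EqvGen.rel m d ⟨y, hmy, hyd⟩)
  | refl x =>
    intro b d hxb hxd
    exact sameSource hpred hxb hxd
  | symm x y _ ih =>
    intro b d hyb hxd
    exact (ih d b hxd hyb).symm _ _
  | trans x y z _ _ ih₁ ih₂ =>
    intro b d hxb hzd
    obtain ⟨m, hym⟩ := hsucc y
    exact (ih₁ b m hxb hym).trans _ _ _ (ih₂ m d hym hzd)

/-- Shifting an "odd" equivalence: if `r x₀ x₁` and some successor of `y` is
`q`-equivalent to `x₀`, then `y` is `q`-equivalent to `x₁`. -/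
lemma odd_shift (hsucc : ∀ x : V, ∃ y, r x y) (hpred : ∀ y : V, ∃ x, r x y) {x₀ x₁ y y' : V} (h01 : r x₀ x₁) (hyy' : r y y')
    (h : EqvGen (q) x₀ y') : EqvGen (q) x₁ y := by
  obtain ⟨c, hc⟩ := hsucc y'
  have h1 : EqvGen (q) x₁ c := succ_equiv hsucc hpred h x₁ c h01 hc
  have h2 : EqvGen (q) y c := EqvGen.rel y c ⟨y', hyy', hc⟩
  exact h1.trans _ _ _ (h2.symm _ _)

/-- Parity decomposition: any `r`-equivalence is either a `q`-equivalence or an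
"odd" one. -/
lemma parity (hsucc : ∀ x : V, ∃ y, r x y) (hpred : ∀ y : V, ∃ x, r x y) : ∀ {a b : V}, EqvGen r a b →
    EqvGen (q) a b ∨ ∃ b', r b b' ∧ EqvGen (q) a b' := by
  intro a b h
  induction h with
  | rel x y hxy =>
    obtain ⟨c, hc⟩ := hsucc y
    exact Or.inr ⟨c, hc, EqvGen.rel x c ⟨y, hxy, hc⟩⟩
  | refl x => exact Or.inl (EqvGen.refl x)
  | symm x y _ ih =>
    rcases ih with h | ⟨y', hyy', hxy'⟩
    · exact Or.inl (h.symm _ _)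
    · obtain ⟨x', hxx'⟩ := hsucc x
      exact Or.inr ⟨x', hxx', (odd_shift hsucc hpred hxx' hyy' hxy').symm _ _⟩
  | trans x y z _ _ ih₁ ih₂ =>
    rcases ih₁ with h₁ | ⟨y', hyy', hxy'⟩ <;> rcases ih₂ with h₂ | ⟨z', hzz', hyz'⟩
    · exact Or.inl (h₁.trans _ _ _ h₂)
    · exact Or.inr ⟨z', hzz', h₁.trans _ _ _ hyz'⟩
    · obtain ⟨z', hzz'⟩ := hsucc z
      have : EqvGen (q) y' z' := succ_equiv hsucc hpred h₂ y' z' hyy' hzz'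
      exact Or.inr ⟨z', hzz', hxy'.trans _ _ _ this⟩
    · exact Or.inl (hxy'.trans _ _ _ (odd_shift hsucc hpred hyy' hzz' hyz'))

end

/-- If every vertex has a successor and a predecessor, then every irreducible complete
set for `r` is the union of at most two irreducible complete sets for the composed
relation `r ∘ r`. -/
theorem stmt_11 {V : Type*} (r : V → V → Prop)
    (hsucc : ∀ x : V, ∃ y, r x y) (hpred : ∀ y : V, ∃ x, r x y)
    (S : Set V) (hS : IsIrredComplete r S) :
    ∃ S₁ S₂ : Set V, S = S₁ ∪ S₂ ∧ S₁.Nonempty ∧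
      IsIrredComplete (fun x z => ∃ y, r x y ∧ r y z) S₁ ∧
      (S₂ = ∅ ∨ IsIrredComplete (fun x z => ∃ y, r x y ∧ r y z) S₂) := by
  obtain ⟨⟨x₀, hx₀⟩, hSf, hSb, hSirr⟩ := hS
  obtain ⟨x₁, h01⟩ := hsucc x₀
  have hx₁ : x₁ ∈ S := hSf x₀ hx₀ x₁ h01
  set q : V → V → Prop := fun x z => ∃ y, r x y ∧ r y z with hq
  -- S is forward/backward complete for q
  have hSfq : IsForwardComplete q S := by
    rintro a ha b ⟨m, ham, hmb⟩
    exact hSf m (hSf a ha m ham) b hmb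
  have hSbq : IsBackwardComplete q S := by
    rintro a b ⟨m, ham, hmb⟩ hb
    exact hSb a m ham (hSb m b hmb hb)
  -- every element of S is EqvGen-r-equivalent to x₀
  have hSclass : ∀ y ∈ S, Relation.EqvGen r x₀ y := by
    intro y hy
    have hsub : {z | Relation.EqvGen r x₀ z} ⊆ S := by
      intro z hz
      exact (mem_iff_of_eqvGen hSf hSb (hz : Relation.EqvGen r x₀ z)).mp hx₀
    obtain ⟨_, hf, hb, _⟩ := isIrredComplete_class r x₀
    have := hSirr _ ⟨x₀, Relation.EqvGen.refl x₀⟩ hf hb hsub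
    rw [← this] at hy
    exact hy
  refine ⟨{z | Relation.EqvGen q x₀ z}, {z | Relation.EqvGen q x₁ z}, ?_, ⟨x₀, Relation.EqvGen.refl x₀⟩, isIrredComplete_class q x₀, Or.inr (isIrredComplete_class q x₁)⟩
  apply Set.Subset.antisymm
  · intro y hy
    rcases parity hsucc hpred (hSclass y hy) with h | ⟨y', hyy', hxy'⟩
    · exact Or.inl h
    · exact Or.inr (odd_shift hsucc hpred h01 hyy' hxy')
  · rintro y (hy | hy)
    · exact (mem_iff_of_eqvGen hSfq hSbq hy).mp hx₀
    · exact (mem_iff_of_eqvGen hSfq hSbq hy).mp hx₁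
end

section
/- Let d₁, d₂, M be real numbers with 0 < d₁ < d₂ and M > 0, let n ≥ 1 be a natural number, and let x : ℕ → ℝ satisfy x(n) = x(0) and |d₂·x(i) − d₁·x(i+1)| < M for every i < n. Then |x(0)| < M·d₂/(d₂ − d₁)². -/
/-!
Along a cycle, look at a vertex `i` where `|x i|` is maximal. Its successor has no larger
absolute value, so `(d₂ - d₁) * |x i| ≤ |d₂ * x i - d₁ * x (i + 1)| < M`, whence every `|x j|`,
in particular `|x 0|`, is below `M / (d₂ - d₁) ≤ M * d₂ / (d₂ - d₁) ^ 2`.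
-/

lemma exists_forall_abs_le_of_periodic {x : ℕ → ℝ} {n : ℕ} (hn : 1 ≤ n) (hcyc : x n = x 0) :
    ∃ i < n, ∀ j ≤ n, |x j| ≤ |x i| := by
  obtain ⟨i, hi, hmax⟩ :=
    (Finset.range n).exists_max_image (fun j => |x j|) (Finset.nonempty_range_iff.mpr (by omega))
  refine ⟨i, Finset.mem_range.mp hi, fun j hj => ?_⟩
  rcases hj.lt_or_eq with hj | rfl
  · exact hmax j (Finset.mem_range.mpr hj)
  · rw [hcyc]
    exact hmax 0 (Finset.mem_range.mpr (by omega))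

lemma sub_mul_abs_le_abs_sub {d₁ d₂ u v : ℝ} (hd₁ : 0 ≤ d₁) (huv : |v| ≤ |u|) :
    (d₂ - d₁) * |u| ≤ |d₂ * u - d₁ * v| := by
  calc (d₂ - d₁) * |u| ≤ |d₂| * |u| - d₁ * |v| := by
        nlinarith [le_abs_self d₂, abs_nonneg u]
    _ = |d₂ * u| - |d₁ * v| := by rw [abs_mul, abs_mul, abs_of_nonneg hd₁]
    _ ≤ |d₂ * u - d₁ * v| := abs_sub_abs_le_abs_sub _ _

lemma abs_lt_div_sub_of_periodic {d₁ d₂ M : ℝ} (hd₁ : 0 ≤ d₁) (hd : d₁ < d₂) {n : ℕ}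
    (hn : 1 ≤ n) {x : ℕ → ℝ} (hcyc : x n = x 0)
    (hbd : ∀ i < n, |d₂ * x i - d₁ * x (i + 1)| < M) :
    ∀ j ≤ n, |x j| < M / (d₂ - d₁) := by
  obtain ⟨i, hi, hmax⟩ := exists_forall_abs_le_of_periodic hn hcyc
  have hpos : 0 < d₂ - d₁ := sub_pos.mpr hd
  have hxi : (d₂ - d₁) * |x i| < M :=
    (sub_mul_abs_le_abs_sub hd₁ (hmax (i + 1) hi)).trans_lt (hbd i hi)
  intro j hj
  rw [lt_div_iff₀ hpos]
  nlinarith [hmax j hj]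

/-- The numerical estimate bounding heights of points on a directed cycle for a
polarized unbalanced self-correspondence. -/
theorem stmt_13 (d₁ d₂ M : ℝ) (h₁ : 0 < d₁) (h₂ : d₁ < d₂) (hM : 0 < M)
    (n : ℕ) (hn : 1 ≤ n) (x : ℕ → ℝ) (hcyc : x n = x 0)
    (hbd : ∀ i < n, |d₂ * x i - d₁ * x (i + 1)| < M) :
    |x 0| < M * d₂ / (d₂ - d₁) ^ 2 := by
  have hpos : 0 < d₂ - d₁ := sub_pos.mpr h₂
  calc |x 0| < M / (d₂ - d₁) := abs_lt_div_sub_of_periodic h₁.le h₂ hn hcyc hbd 0 (Nat.zero_le n)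
    _ = M * (d₂ - d₁) / (d₂ - d₁) ^ 2 := by field_simp
    _ ≤ M * d₂ / (d₂ - d₁) ^ 2 := by gcongr; linarith
end
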